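/- arXiv:1810.13325 — 2 statements merged into one kernel-verified Lean document; each statement's English description precedes it below -/
import Mathlib

section
/- Under the helping rule 'every newly started operation helps all pending operations with phase number ≤ its own phase before completing', any pending operation with phase p is helped (hence completed) after at most n subsequent operation arrivals, where n is the number of threads: formally, if each of the n threads has at most one pending operation and every thread that begins a new operation first completes all pending operations of phase ≤ its own (which exceeds all previously assigned phases), then a pending operation cannot remain pending across the start of more than n new operations. -/
/-- Starting a new operation with phase `q` completes (removes) every pending
operation with phase ≤ q. -/
def startOp (q : ℕ) (pending : Finset ℕ) : Finset ℕ :=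
  pending.filter (fun r => q < r)

lemma not_mem_foldl_startOp (p : ℕ) (qs : List ℕ) :
    ∀ S : Finset ℕ, p ∉ S → p ∉ qs.foldl (fun S q => startOp q S) S := by
  induction qs with
  | nil => intro S h; simpa using h
  | cons q qs ih =>
    intro S h
    simp only [List.foldl_cons]
    exact ih _ (fun hmem => h (Finset.mem_filter.mp hmem).1)

/-- Under the helping rule, a pending operation with phase `p` cannot remain
pending across the start of more than `n` new operations: if `n ≥ 1` threads
exist and at least `n` new operations start, each with phase at least `p`
(phases exceed all previously assigned phases), then `p` is no longer
pending afterwards. -/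
theorem helping_bound (n : ℕ) (hn : 1 ≤ n) (p : ℕ) (pending : Finset ℕ)
    (hp : p ∈ pending) (qs : List ℕ) (hlen : n ≤ qs.length)
    (hq : ∀ q ∈ qs, p ≤ q) :
    p ∉ qs.foldl (fun S q => startOp q S) pending := by
  cases qs with
  | nil => simp at hlen; omega
  | cons q qs =>
    simp only [List.foldl_cons]
    apply not_mem_foldl_startOp
    intro hmem
    have := (Finset.mem_filter.mp hmem).2
    have := hq q (by simp)
    omega
end

section
/- In a sorted linked list with logical deletion (marking), if every physically reachable unmarked node was inserted between correctly located predecessors, then the keys of unmarked nodes reachable from the head form a strictly increasing sequence; marking a node preserves this invariant, and physically unlinking a marked node preserves both the invariant and the set of unmarked reachable keys. -/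
/-- A list node: an integer key together with a mark bit. -/
abbrev HNode := ℤ × Bool

/-- Keys of the reachable nodes. -/
def keys (l : List HNode) : List ℤ := l.map Prod.fst

/-- Abstraction: set of keys of unmarked reachable nodes. -/
def absSet (l : List HNode) : Finset ℤ :=
  ((l.filter (fun n => n.2 = false)).map Prod.fst).toFinset

/-!
Marking keeps every key in place, and unlinking deletes an entry of the key list, so both preserve
strict sortedness. A marked node is invisible to the abstraction, so marking node `i` has the same
abstraction as unlinking it; and since strict sortedness makes the nodes pairwise distinct,
unlinking an unmarked node removes exactly its key.
-/

lemma mem_absSet {a : ℤ} {l : List HNode} : a ∈ absSet l ↔ (a, false) ∈ l := by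
  simp [absSet]

lemma keys_set_of_fst_eq {l : List HNode} {i : ℕ} (hi : i < l.length) {x : HNode}
    (hx : x.1 = l[i].1) : keys (l.set i x) = keys l := by
  simp only [keys, List.map_set, hx]
  have hself := List.set_getElem_self (as := l.map Prod.fst) (by simpa using hi)
  rwa [List.getElem_map] at hself

lemma isChain_keys_eraseIdx {l : List HNode} (h : (keys l).IsChain (· < ·)) (i : ℕ) :
    (keys (l.eraseIdx i)).IsChain (· < ·) := by
  rw [List.isChain_iff_pairwise] at h ⊢
  exact h.sublist ((List.eraseIdx_sublist l i).map Prod.fst)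

lemma nodup_of_isChain_keys {l : List HNode} (h : (keys l).IsChain (· < ·)) : l.Nodup :=
  (List.isChain_iff_pairwise.mp h).nodup.of_map Prod.fst

lemma absSet_eraseIdx_of_marked {l : List HNode} {i : ℕ} (hi : i < l.length)
    (hmarked : l[i].2 = true) : absSet (l.eraseIdx i) = absSet l := by
  ext a
  rw [mem_absSet, mem_absSet, List.mem_eraseIdx_iff_getElem, List.mem_iff_getElem]
  constructor
  · rintro ⟨j, hj, -, h⟩
    exact ⟨j, hj, h⟩
  · rintro ⟨j, hj, h⟩
    refine ⟨j, hj, ?_, h⟩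
    rintro rfl
    simp [h] at hmarked

lemma absSet_set_marked {l : List HNode} {i : ℕ} (hi : i < l.length) (k : ℤ) :
    absSet (l.set i (k, true)) = absSet (l.eraseIdx i) := by
  rw [← List.eraseIdx_set_eq (a := (k, true)), absSet_eraseIdx_of_marked (by simpa using hi)]
  simp

lemma absSet_eraseIdx_of_unmarked {l : List HNode} (hl : l.Nodup) {i : ℕ} (hi : i < l.length)
    (hunmarked : l[i].2 = false) : absSet (l.eraseIdx i) = (absSet l).erase l[i].1 := by
  have hnode : l[i] = (l[i].1, false) := Prod.ext rfl hunmarked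
  ext a
  rw [Finset.mem_erase, mem_absSet, mem_absSet, ← hl.erase_getElem i hi, hl.mem_erase_iff, hnode]
  simp

/-- In the Harris-style list, if the reachable keys are strictly increasing:
marking a reachable node preserves the sortedness invariant and removes
exactly its key from the abstraction, and physically unlinking a marked node
preserves the invariant and leaves the abstraction unchanged. -/
theorem harris_list_invariants (l : List HNode) (i : Fin l.length)
    (hsorted : (keys l).Chain' (· < ·)) :
    ((keys (l.set i ((l.get i).1, true))).Chain' (· < ·)) ∧
    ((l.get i).2 = false →
      absSet (l.set i ((l.get i).1, true)) = (absSet l).erase (l.get i).1) ∧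
    ((l.get i).2 = true →
      (keys (l.eraseIdx i)).Chain' (· < ·) ∧
      absSet (l.eraseIdx i) = absSet l) := by
  obtain ⟨i, hi⟩ := i
  simp only [List.get_eq_getElem]
  refine ⟨?_, fun hunmarked => ?_, fun hmarked => ?_⟩
  · rwa [keys_set_of_fst_eq (x := (l[i].1, true)) hi rfl]
  · rw [absSet_set_marked hi,
      absSet_eraseIdx_of_unmarked (nodup_of_isChain_keys hsorted) hi hunmarked]
  · exact ⟨isChain_keys_eraseIdx hsorted i, absSet_eraseIdx_of_marked hi hmarked⟩
end
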